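/- Let H be a subspace of a finite-dimensional inner product space V, let D be a symmetric endomorphism of V, and suppose there is λ₀ < 0 such that every s ∈ H satisfies (i) ⟨Ds,s⟩ ≥ λ₀‖s‖² and (ii) s is in the sum of eigenspaces of D with negative eigenvalues. Then dim H ≤ N_{D²}(λ₀²), the number of eigenvalues μ of D² (with multiplicity) satisfying μ ≤ λ₀². -/

import Mathlib

/-!
Let `K` be the sum of the eigenspaces of `D` with eigenvalue `< λ₀`. Expanding `s ∈ K` into
mutually orthogonal eigenvectors gives `⟪D s, s⟫ < λ₀ ‖s‖²` for `s ≠ 0`, so hypothesis (i)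
forces `H ⊓ K = 0`. By (ii), `H` lies in `K ⊔ W`, where `W` is the sum of the `D`-eigenspaces
with eigenvalue `μ ∈ [λ₀, 0)`; each of these sits in the `D²`-eigenspace of `μ² ≤ λ₀²`.
A subspace meeting `K` trivially inside `K ⊔ B` has dimension at most `dim B`.
-/

open scoped InnerProductSpace
open Module Module.End

theorem Submodule.finrank_le_of_disjoint_of_le_sup {K V : Type*} [DivisionRing K]
    [AddCommGroup V] [Module K V] [FiniteDimensional K V] {H A B : Submodule K V}
    (hdisj : Disjoint H A) (hle : H ≤ A ⊔ B) : finrank K H ≤ finrank K B := by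
  have hHA : finrank K ↥(H ⊔ A) = finrank K H + finrank K A := by
    rw [← finrank_sup_add_finrank_inf_eq, hdisj.eq_bot, finrank_bot, add_zero]
  have hHA_le : finrank K ↥(H ⊔ A) ≤ finrank K ↥(A ⊔ B) :=
    Submodule.finrank_mono (sup_le hle le_sup_left)
  have := finrank_add_le_finrank_add_finrank A B
  omega

theorem Module.End.eigenspace_le_eigenspace_comp_self {R M : Type*} [CommRing R]
    [AddCommGroup M] [Module R M] (f : End R M) (μ : R) :
    eigenspace f μ ≤ eigenspace (f ∘ₗ f) (μ ^ 2) := by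
  intro x hx
  rw [mem_eigenspace_iff] at hx ⊢
  rw [LinearMap.comp_apply, hx, map_smul, hx, smul_smul, sq]

theorem LinearMap.IsSymmetric.inner_map_self_lt_of_mem_iSup_eigenspace {E : Type*}
    [NormedAddCommGroup E] [InnerProductSpace ℝ E] {T : E →ₗ[ℝ] E} (hT : T.IsSymmetric)
    {c : ℝ} {x : E} (hx : x ∈ ⨆ (μ : ℝ) (_ : μ < c), eigenspace T μ) (hx0 : x ≠ 0) :
    ⟪T x, x⟫_ℝ < c * ‖x‖ ^ 2 := by
  rw [iSup_subtype', Submodule.mem_iSup_iff_exists_finset] at hx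
  obtain ⟨s, hs⟩ := hx
  obtain ⟨v, rfl⟩ := (Submodule.mem_iSup_finset_iff_exists_sum _ _).mp hs
  have hV := hT.orthogonalFamily_eigenspaces.comp (Subtype.val_injective (p := (· < c)))
  have hTv : T (∑ μ ∈ s, (v μ : E)) = ∑ μ ∈ s, (((μ : ℝ) • v μ : eigenspace T μ) : E) := by
    simp only [map_sum, Submodule.coe_smul, fun μ => mem_eigenspace_iff.mp (v μ).2]
  have hinner :
      ⟪T (∑ μ ∈ s, (v μ : E)), ∑ μ ∈ s, (v μ : E)⟫_ℝ = ∑ μ ∈ s, (μ : ℝ) * ‖v μ‖ ^ 2 := by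
    rw [hTv]
    refine (hV.inner_sum (fun μ => (μ : ℝ) • v μ) v s).trans (Finset.sum_congr rfl fun μ _ => ?_)
    rw [real_inner_smul_left, real_inner_self_eq_norm_sq]
  obtain ⟨μ₀, hμ₀, hv0⟩ : ∃ μ ∈ s, v μ ≠ 0 := by
    by_contra! h
    exact hx0 (Finset.sum_eq_zero fun μ hμ => by simp [h μ hμ])
  calc _ = ∑ μ ∈ s, (μ : ℝ) * ‖v μ‖ ^ 2 := hinner
    _ < ∑ μ ∈ s, c * ‖v μ‖ ^ 2 :=
      Finset.sum_lt_sum (fun μ _ => by gcongr; exact μ.2.le) ⟨μ₀, hμ₀, by gcongr; exact μ₀.2⟩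
    _ = c * ‖∑ μ ∈ s, (v μ : E)‖ ^ 2 := by
      rw [← Finset.mul_sum]; exact congrArg (c * ·) (hV.norm_sum v s).symm

theorem dim_bound_by_counting_general
    {V : Type*} [NormedAddCommGroup V] [InnerProductSpace ℝ V]
    [FiniteDimensional ℝ V]
    (D : V →ₗ[ℝ] V) (hD : LinearMap.IsSymmetric D)
    (H : Submodule ℝ V) (lam0 : ℝ)
    (hQ : ∀ s ∈ H, lam0 * ‖s‖ ^ 2 ≤ ⟪D s, s⟫_ℝ)
    (hneg : ∀ s ∈ H, s ∈ ⨆ (μ : ℝ) (_ : μ < 0), Module.End.eigenspace D μ) :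
    Module.finrank ℝ H ≤
      Module.finrank ℝ
        ↥(⨆ (μ : ℝ) (_ : μ ≤ lam0 ^ 2), Module.End.eigenspace (D ∘ₗ D) μ) := by
  set K := ⨆ (μ : ℝ) (_ : μ < lam0), eigenspace D μ
  have hdisj : Disjoint H K := Submodule.disjoint_def.mpr fun s hsH hsK => by
    by_contra hs0
    exact (hQ s hsH).not_gt (hD.inner_map_self_lt_of_mem_iSup_eigenspace hsK hs0)
  have hsplit : (⨆ (μ : ℝ) (_ : μ < 0), eigenspace D μ) ≤
      K ⊔ ⨆ (μ : ℝ) (_ : μ ≤ lam0 ^ 2), eigenspace (D ∘ₗ D) μ := by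
    refine iSup₂_le fun μ hμ => ?_
    rcases lt_or_ge μ lam0 with hlt | hge
    · exact le_sup_of_le_left (le_iSup₂_of_le μ hlt le_rfl)
    · refine le_sup_of_le_right (le_iSup₂_of_le (μ ^ 2) ?_ (eigenspace_le_eigenspace_comp_self D μ))
      nlinarith
  exact Submodule.finrank_le_of_disjoint_of_le_sup hdisj fun s hs => hsplit (hneg s hs)

/-- If `H` is a subspace of a finite-dimensional inner product
space, `D` symmetric, `λ₀ < 0`, and every `s ∈ H` satisfies
`⟨Ds,s⟩ ≥ λ₀‖s‖²` and lies in the sum of negative eigenspaces of `D`, then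
`dim H ≤ N_{D²}(λ₀²)`, the dimension of the sum of eigenspaces of `D²` with
eigenvalue `≤ λ₀²`. -/
theorem dim_bound_by_counting
    {V : Type*} [NormedAddCommGroup V] [InnerProductSpace ℝ V]
    [FiniteDimensional ℝ V]
    (D : V →ₗ[ℝ] V) (hD : LinearMap.IsSymmetric D)
    (H : Submodule ℝ V) (lam0 : ℝ) (hlam0 : lam0 < 0)
    (hQ : ∀ s ∈ H, lam0 * ‖s‖ ^ 2 ≤ ⟪D s, s⟫_ℝ)
    (hneg : ∀ s ∈ H, s ∈ ⨆ (μ : ℝ) (_ : μ < 0), Module.End.eigenspace D μ) :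
    Module.finrank ℝ H ≤
      Module.finrank ℝ
        ↥(⨆ (μ : ℝ) (_ : μ ≤ lam0 ^ 2), Module.End.eigenspace (D ∘ₗ D) μ) :=
  dim_bound_by_counting_general D hD H lam0 hQ hneg
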